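/- arXiv:2207.06964 — 2 statements merged into one kernel-verified Lean document; each statement's English description precedes it below -/
import Mathlib

section
/- The function h(x,y) = e^{-α/x - α/y} satisfies: for all x, y > α, the quadratic form (x, y)·H(x,y)·(x, y)ᵀ is strictly negative, where H is the Hessian of h at (x,y). -/
/-! In the variables `u = α/x`, `v = α/y` the quadratic form equals `h · s (s - 2)` with
`s = u + v`, and `x, y > α > 0` puts `s` in `(0, 2)`. -/

theorem hessian_quadratic_form_eq (α : ℝ) {x y : ℝ} (hx : x ≠ 0) (hy : y ≠ 0) (h : ℝ) :
    x ^ 2 * ((α / x ^ 3) * (α / x - 2) * h)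
      + 2 * (x * y * ((α ^ 2 / (x ^ 2 * y ^ 2)) * h))
      + y ^ 2 * ((α / y ^ 3) * (α / y - 2) * h)
      = (α / x + α / y) * (α / x + α / y - 2) * h := by
  field_simp
  ring

/-- The quadratic form `(x, y)·H(x,y)·(x, y)ᵀ` of the Hessian of
`h(x,y) = exp (-α/x - α/y)`, with entries
`∂²h/∂x² = (α/x³)(α/x − 2)h`, `∂²h/∂y² = (α/y³)(α/y − 2)h`,
`∂²h/∂x∂y = (α²/(x²y²))h`, is strictly negative for `x, y > α`. -/
theorem hessian_quadratic_form_neg (α : ℝ) (hα : 0 < α) (x y : ℝ)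
    (hx : α < x) (hy : α < y) :
    x ^ 2 * ((α / x ^ 3) * (α / x - 2) * Real.exp (-α / x - α / y))
      + 2 * (x * y * ((α ^ 2 / (x ^ 2 * y ^ 2)) * Real.exp (-α / x - α / y)))
      + y ^ 2 * ((α / y ^ 3) * (α / y - 2) * Real.exp (-α / x - α / y)) < 0 := by
  have hx0 : 0 < x := hα.trans hx
  have hy0 : 0 < y := hα.trans hy
  rw [hessian_quadratic_form_eq α hx0.ne' hy0.ne']
  have hs_pos : 0 < α / x + α / y := by positivity
  have hs_lt_two : α / x + α / y < 2 := by
    have := (div_lt_one hx0).mpr hx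
    have := (div_lt_one hy0).mpr hy
    linarith
  exact mul_neg_of_neg_of_pos (mul_neg_of_pos_of_neg hs_pos (by linarith)) (Real.exp_pos _)
end

section
/- Let f : [0,∞) → [0,1] be strictly decreasing. Let y₁,...,y_K be points in an interval [I₀ − L, I₀ + L], symmetric about I₀ (i.e., the multiset {y_k − I₀} equals {I₀ − y_k}). If y, y' are two of these points with |y − I₀| < |y' − I₀|, then Σ_{k: y_k ≠ y} f(|y_k − y|) > Σ_{k: y_k ≠ y'} f(|y_k − y'|). -/
/-!
On the grid `p k = I₀ - L + k δ`, the agent with index `k` sees `k` agents on one side and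
`N - k` on the other (`N = K - 1`), at distances `δ, 2δ, …`, so its total interest is
`G k + G (N - k)` with `G m = ∑_{d=1}^m f (d δ)`. Since `f` is strictly decreasing, the
increments of `G` strictly decrease, so `G a + G b` with `a + b = N` fixed strictly increases
with `min a b`; and `min k (N - k)` grows exactly as `|p k - I₀|` shrinks.
-/

open Finset

theorem Fin.sum_filter_ne_abs_sub {M : Type*} [AddCommMonoid M] (g : ℝ → M) {n : ℕ} (i : Fin n) :
    ∑ k ∈ univ.filter (· ≠ i), g |(k : ℝ) - i|
      = ∑ d ∈ range i, g (d + 1) + ∑ d ∈ range (n - 1 - i), g (d + 1) := by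
  have hn : range n = range (i + 1 + (n - 1 - i)) := congrArg range (by omega)
  simp only [sum_filter, ne_eq, Fin.ext_iff]
  rw [Fin.sum_univ_eq_sum_range (fun k => if ¬k = (i : ℕ) then g |(k : ℝ) - i| else 0), hn,
    sum_range_add, sum_range_succ, ← sum_range_reflect, if_neg (not_not.2 rfl), add_zero]
  congr 1 <;> refine sum_congr rfl fun d hd => ?_ <;> rw [mem_range] at hd
  · rw [if_pos (by omega), Nat.cast_sub (by omega), Nat.cast_sub (by omega),
      abs_of_nonpos (by linarith)]
    congr 1; ring
  · rw [if_pos (by omega), Nat.cast_add, Nat.cast_add_one, abs_of_nonneg (by linarith)]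
    congr 1; ring

theorem sum_filter_ne_abs_sub_of_eq_add_mul {M : Type*} [AddCommMonoid M] (g : ℝ → M) {n : ℕ}
    {p : Fin n → ℝ} {c δ : ℝ} (hδ : δ ≠ 0) (hp : ∀ k, p k = c + k * δ) (i : Fin n) :
    ∑ k ∈ univ.filter (fun k => p k ≠ p i), g |p k - p i|
      = ∑ d ∈ range i, g (|δ| * (d + 1)) + ∑ d ∈ range (n - 1 - i), g (|δ| * (d + 1)) := by
  have hp_sub (k l : Fin n) : p k - p l = ((k : ℝ) - l) * δ := by rw [hp, hp]; ring
  have hp_inj : Function.Injective p := fun k l hkl => by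
    rw [hp, hp] at hkl
    exact Fin.ext (by exact_mod_cast mul_right_cancel₀ hδ (add_left_cancel hkl))
  rw [← Fin.sum_filter_ne_abs_sub (fun x => g (|δ| * x))]
  simp only [hp_inj.ne_iff, hp_sub, abs_mul, mul_comm |δ|]

section

variable {M : Type*} [AddCommMonoid M] [PartialOrder M] [IsOrderedCancelAddMonoid M]
  {u : ℕ → M}

theorem sum_range_add_sum_range_add_lt (hu : StrictAnti u) {a b : ℕ} (hab : a < b) {t : ℕ}
    (ht : 0 < t) :
    ∑ d ∈ range a, u d + ∑ d ∈ range (b + t), u d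
      < ∑ d ∈ range (a + t), u d + ∑ d ∈ range b, u d := by
  have hshift : ∑ d ∈ range t, u (b + d) < ∑ d ∈ range t, u (a + d) :=
    sum_lt_sum_of_nonempty (nonempty_range_iff.2 ht.ne') fun d _ => hu (by omega)
  rw [sum_range_add, sum_range_add, ← add_assoc, add_right_comm _ _ (∑ d ∈ range b, u d)]
  exact add_lt_add_right hshift _

theorem sum_range_add_sum_range_lt_of_min_lt (hu : StrictAnti u) {a b a' b' : ℕ}
    (hsum : a + b = a' + b') (hmin : min a' b' < min a b) :
    ∑ d ∈ range a', u d + ∑ d ∈ range b', u d < ∑ d ∈ range a, u d + ∑ d ∈ range b, u d := by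
  wlog hab : a ≤ b generalizing a b
  · rw [add_comm (∑ d ∈ range a, u d)]
    exact this (by omega) (by omega) (by omega)
  wlog hab' : a' ≤ b' generalizing a' b'
  · rw [add_comm (∑ d ∈ range a', u d)]
    exact this (by omega) (by omega) (by omega)
  obtain ⟨t, rfl⟩ : ∃ t, a = a' + t := ⟨a - a', by omega⟩
  obtain rfl : b' = b + t := by omega
  exact sum_range_add_sum_range_add_lt hu (by omega) (by omega)

end

theorem closer_agent_higher_total_interest_general
    (f : ℝ → ℝ) (hf : StrictAntiOn f (Set.Ici 0))
    (K : ℕ) (hK : 2 ≤ K) (I₀ L : ℝ) (hL : 0 < L)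
    (p : Fin K → ℝ)
    (hp : ∀ k : Fin K, p k = I₀ - L + (k : ℝ) * (2 * L / ((K : ℝ) - 1)))
    (i j : Fin K) (hij : |p i - I₀| < |p j - I₀|) :
    (∑ k ∈ Finset.univ.filter (fun k => p k ≠ p i), f (|p k - p i|))
      > ∑ k ∈ Finset.univ.filter (fun k => p k ≠ p j), f (|p k - p j|) := by
  set δ := 2 * L / ((K : ℝ) - 1)
  set N := K - 1
  have hN : (N : ℝ) = K - 1 := by rw [Nat.cast_sub (by omega), Nat.cast_one]
  have hN_pos : (0 : ℝ) < K - 1 := by rw [← hN]; exact_mod_cast (by omega : 0 < N)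
  have hδ : 0 < δ := div_pos (by positivity) hN_pos
  have hδN : δ * N = 2 * L := by rw [hN]; exact div_mul_cancel₀ _ hN_pos.ne'
  have hp_center (k : Fin K) : p k - I₀ = δ / 2 * (2 * k - N) := by
    rw [hp]; linear_combination (1 / 2 : ℝ) * hδN
  have hcloser : (2 * (i : ℤ) - N).natAbs < (2 * (j : ℤ) - N).natAbs := by
    rw [hp_center, hp_center, abs_mul, abs_mul, mul_lt_mul_iff_right₀ (by positivity)] at hij
    rw [← Int.ofNat_lt, Int.natCast_natAbs, Int.natCast_natAbs]
    exact_mod_cast hij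
  have hu : StrictAnti fun d : ℕ => f (|δ| * (d + 1)) := fun m n hmn =>
    hf (Set.mem_Ici.2 (by positivity)) (Set.mem_Ici.2 (by positivity))
      (mul_lt_mul_of_pos_left (by exact_mod_cast Nat.succ_lt_succ hmn) (abs_pos.2 hδ.ne'))
  rw [gt_iff_lt, sum_filter_ne_abs_sub_of_eq_add_mul f hδ.ne' hp,
    sum_filter_ne_abs_sub_of_eq_add_mul f hδ.ne' hp]
  exact sum_range_add_sum_range_lt_of_min_lt hu (by omega) (by omega)

theorem closer_agent_higher_total_interest
    (f : ℝ → ℝ) (hf : StrictAntiOn f (Set.Ici 0))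
    (hf01 : ∀ x : ℝ, 0 ≤ x → f x ∈ Set.Icc (0 : ℝ) 1)
    (K : ℕ) (hK : 2 ≤ K) (I₀ L : ℝ) (hL : 0 < L)
    (p : Fin K → ℝ)
    (hp : ∀ k : Fin K, p k = I₀ - L + (k : ℝ) * (2 * L / ((K : ℝ) - 1)))
    (i j : Fin K) (hij : |p i - I₀| < |p j - I₀|) :
    (∑ k ∈ Finset.univ.filter (fun k => p k ≠ p i), f (|p k - p i|))
      > ∑ k ∈ Finset.univ.filter (fun k => p k ≠ p j), f (|p k - p j|) :=
  closer_agent_higher_total_interest_general f hf K hK I₀ L hL p hp i j hij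
end
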